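/- Let h^+_k(z) = |z|^k for |z| ≤ 1 and h^+_k(z) = |z|^{-1/2} e^{Re z} for |z| > 1. Suppose V ∈ L^∞[0, r_0] is continuous near r_0 with V(t) ~ κ(r_0 − t)^{σ−1} as t → r_0 for some σ ≥ 1, κ ≠ 0. Then for each ε > 0 and k ≥ 0 there exist constants C, N such that for θ ∈ (−π/2+ε, π/2−ε) and a ≥ N, ∫_{1/a}^{r_0} h^+_k(t a e^{iθ})² |V(t)| sinh t dt ≤ (C/a)(a cos θ)^{−σ} e^{2 r_0 a cos θ}. -/

import Mathlib

/-!
For `t > 1/a` the point `t a e^{iθ}` lies outside the unit disc, so `h⁺_k(t a e^{iθ})² =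
(ta)⁻¹ e^{2tx}` with `x = a cos θ ≥ a sin ε`. The asymptotics of `V` give `s < r₀` with
`|V(t)| ≤ c (r₀ - t)^{σ-1}` on `(s, r₀)`. On `(1/a, s]` the bound `|V| ≤ M` leaves `e^{2sx}`,
which is `O(x^{-σ-1} e^{2r₀x})`; on `(s, r₀)` the substitution `t ↦ r₀ - t` turns the integral
into a truncated Gamma integral, at most `Γ(σ) (2x)^{-σ} e^{2r₀x}` (Laplace's method).
-/

open Set Filter MeasureTheory

/-- `h⁺_k(z) = |z|^k` for `|z| ≤ 1` and `|z|^{-1/2} e^{Re z}` for `|z| > 1`. -/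
noncomputable def hplus (k : ℝ) (z : ℂ) : ℝ :=
  if ‖z‖ ≤ 1 then (‖z‖) ^ k
  else (‖z‖) ^ (-(1 : ℝ) / 2) * Real.exp z.re

open Real

lemma sq_hplus_of_one_lt_norm (k : ℝ) {z : ℂ} (hz : 1 < ‖z‖) :
    hplus k z ^ 2 = ‖z‖⁻¹ * exp (2 * z.re) := by
  have hsq : (‖z‖ ^ (-(1 : ℝ) / 2)) ^ 2 = ‖z‖⁻¹ := by
    rw [← rpow_natCast, ← rpow_mul (norm_nonneg z)]
    norm_num [rpow_neg_one]
  rw [hplus, if_neg hz.not_ge, mul_pow, hsq, ← exp_nat_mul]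
  norm_num

lemma sq_hplus_le {k t a θ q : ℝ} (hq : 0 < q) (hqt : q ≤ t * a) (hta : 1 < t * a) :
    hplus k ((t : ℂ) * (a : ℂ) * Complex.exp (θ * Complex.I)) ^ 2
      ≤ q⁻¹ * exp (2 * (a * cos θ) * t) := by
  have hz : (t : ℂ) * (a : ℂ) * Complex.exp (θ * Complex.I)
      = ((t * a : ℝ) : ℂ) * Complex.exp (θ * Complex.I) := by push_cast; ring
  have hnorm : ‖((t * a : ℝ) : ℂ) * Complex.exp (θ * Complex.I)‖ = t * a := by
    rw [norm_mul, Complex.norm_exp_ofReal_mul_I, mul_one, Complex.norm_real, Real.norm_eq_abs,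
      abs_of_pos (by linarith)]
  rw [hz, sq_hplus_of_one_lt_norm k (by rwa [hnorm]), hnorm, Complex.re_ofReal_mul,
    Complex.exp_ofReal_mul_I_re]
  calc (t * a)⁻¹ * exp (2 * (t * a * cos θ)) ≤ q⁻¹ * exp (2 * (t * a * cos θ)) := by
        gcongr
    _ = q⁻¹ * exp (2 * (a * cos θ) * t) := by ring_nf

lemma intervalIntegrable_rpow_sub_mul_exp {σ : ℝ} (hσ : 0 < σ) (r B u v : ℝ) :
    IntervalIntegrable (fun t => (r - t) ^ (σ - 1) * exp (B * t)) volume u v := by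
  have h := (intervalIntegral.intervalIntegrable_rpow' (a := r - u) (b := r - v)
    (by linarith : -1 < σ - 1)).comp_sub_left r
  simp only [sub_sub_cancel] at h
  exact h.mul_continuousOn (by fun_prop)

lemma integral_rpow_sub_mul_exp_le {σ B u r : ℝ} (hσ : 0 < σ) (hB : 0 < B) (hur : u ≤ r) :
    ∫ t in u..r, (r - t) ^ (σ - 1) * exp (B * t) ≤ exp (B * r) * (B ^ (-σ) * Gamma σ) := by
  have hshift : ∀ t : ℝ, (r - t) ^ (σ - 1) * exp (B * t)
      = exp (B * r) * ((r - t) ^ (σ - 1) * exp (-(B * (r - t)))) := by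
    intro t
    rw [mul_left_comm, ← exp_add]
    ring_nf
  simp_rw [hshift]
  rw [intervalIntegral.integral_const_mul]
  gcongr
  have hψ : IntegrableOn (fun s : ℝ => s ^ (σ - 1) * exp (-(B * s))) (Ioi 0) := by
    simpa [rpow_one, neg_mul] using
      integrableOn_rpow_mul_exp_neg_mul_rpow (s := σ - 1) (p := 1) (b := B) (by linarith) one_pos hB
  rw [intervalIntegral.integral_comp_sub_left (fun s => s ^ (σ - 1) * exp (-(B * s))), sub_self,
    intervalIntegral.integral_of_le (by linarith), rpow_neg hB.le, ← inv_rpow hB.le, ← one_div,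
    ← integral_rpow_mul_exp_neg_mul_Ioi hσ hB]
  refine setIntegral_mono_set hψ ?_ Ioc_subset_Ioi_self.eventuallyLE
  filter_upwards [self_mem_ae_restrict measurableSet_Ioi] with s hs
  exact mul_nonneg (rpow_nonneg (le_of_lt hs) _) (exp_pos _).le

lemma integral_le_of_le_exp_of_le_rpow_sub_mul_exp {F : ℝ → ℝ} {u s r A D B σ : ℝ}
    (hσ : 0 < σ) (hB : 0 < B) (hur : u ≤ r) (hA : 0 ≤ A) (hD : 0 ≤ D)
    (hF : ∀ t ∈ Ioo u r, 0 ≤ F t)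
    (hfar : ∀ t ∈ Ioo u r, t ≤ s → F t ≤ A * exp (B * t))
    (hnear : ∀ t ∈ Ioo u r, s < t → F t ≤ D * ((r - t) ^ (σ - 1) * exp (B * t))) :
    ∫ t in u..r, F t ≤ A * (r - u) * exp (B * s) + D * (exp (B * r) * (B ^ (-σ) * Gamma σ)) := by
  set G : ℝ → ℝ := fun t => A * exp (B * s) + D * ((r - t) ^ (σ - 1) * exp (B * t))
  have hG : IntervalIntegrable G volume u r :=
    intervalIntegrable_const.add ((intervalIntegrable_rpow_sub_mul_exp hσ r B u r).const_mul D)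
  have hFG : ∀ t ∈ Ioo u r, F t ≤ G t := by
    intro t ht
    have hφ : 0 ≤ D * ((r - t) ^ (σ - 1) * exp (B * t)) :=
      mul_nonneg hD (mul_nonneg (rpow_nonneg (by linarith [ht.2]) _) (exp_pos _).le)
    rcases le_or_gt t s with hts | hst
    · have : A * exp (B * t) ≤ A * exp (B * s) := by gcongr
      linarith [hfar t ht hts]
    · linarith [hnear t ht hst, mul_nonneg hA (exp_pos (B * s)).le]
  have hmono : ∫ t in u..r, F t ≤ ∫ t in u..r, G t := by
    simp only [intervalIntegral.integral_of_le hur, integral_Ioc_eq_integral_Ioo]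
    exact integral_mono_of_nonneg (ae_restrict_of_forall_mem measurableSet_Ioo hF)
      (hG.1.mono_set Ioo_subset_Ioc_self) (ae_restrict_of_forall_mem measurableSet_Ioo hFG)
  calc ∫ t in u..r, F t ≤ ∫ t in u..r, G t := hmono
    _ = A * (r - u) * exp (B * s) + D * ∫ t in u..r, (r - t) ^ (σ - 1) * exp (B * t) := by
      rw [intervalIntegral.integral_add intervalIntegrable_const
        ((intervalIntegrable_rpow_sub_mul_exp hσ r B u r).const_mul D),
        intervalIntegral.integral_const, intervalIntegral.integral_const_mul, smul_eq_mul]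
      ring
    _ ≤ _ := by gcongr; exact integral_rpow_sub_mul_exp_le hσ hB hur

lemma exists_norm_le_rpow_of_tendsto_div {V : ℝ → ℂ} {κ : ℂ} {r₀ σ : ℝ} (hr₀ : 0 < r₀)
    (h : Tendsto (fun t : ℝ => V t / (κ * ((r₀ - t : ℝ) : ℂ) ^ ((σ - 1 : ℝ) : ℂ)))
      (nhdsWithin r₀ (Iio r₀)) (nhds 1)) :
    ∃ s ∈ Ioo 0 r₀, ∃ c, 0 ≤ c ∧ ∀ t ∈ Ioo s r₀, ‖V t‖ ≤ c * (r₀ - t) ^ (σ - 1) := by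
  obtain ⟨c, hc, hO⟩ := (Asymptotics.isEquivalent_of_tendsto_one h).isBigO.exists_pos
  have hev : ∀ᶠ t in nhdsWithin r₀ (Iio r₀), ‖V t‖ ≤ c * ‖κ‖ * (r₀ - t) ^ (σ - 1) := by
    filter_upwards [hO.bound, self_mem_nhdsWithin] with t ht htr
    rwa [norm_mul, Complex.norm_cpow_eq_rpow_re_of_pos (sub_pos.2 htr), Complex.ofReal_re,
      ← mul_assoc] at ht
  obtain ⟨l, hl, hsub⟩ := mem_nhdsLT_iff_exists_Ioo_subset.1 hev
  refine ⟨max l (r₀ / 2), ⟨by positivity, max_lt hl (by linarith)⟩, c * ‖κ‖, by positivity,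
    fun t ht => hsub ⟨(le_max_left _ _).trans_lt ht.1, ht.2⟩⟩

lemma eventually_exp_mul_le_rpow_neg_mul_exp_mul {b s r : ℝ} (hb : 0 < b) (hsr : s < r) (p : ℝ) :
    ∀ᶠ x in atTop, exp (b * x * s) ≤ x ^ (-p) * exp (b * x * r) := by
  filter_upwards [(tendsto_rpow_mul_exp_neg_mul_atTop_nhds_zero p (b * (r - s))
    (by nlinarith)).eventually_le_const zero_lt_one, eventually_gt_atTop 0] with x hx hx0
  have hsplit : exp (b * x * s) = exp (-(b * (r - s)) * x) * exp (b * x * r) := by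
    rw [← exp_add]; ring_nf
  rw [hsplit, rpow_neg hx0.le]
  gcongr
  rwa [← one_div, le_div_iff₀' (by positivity)]

lemma sin_le_cos_of_abs_le {θ ε : ℝ} (hε : 0 ≤ ε) (hθ : |θ| ≤ π / 2 - ε) : sin ε ≤ cos θ := by
  rw [← cos_abs, ← cos_pi_div_two_sub]
  exact cos_le_cos_of_nonneg_of_le_pi (abs_nonneg θ) (by linarith [pi_pos]) hθ

lemma sq_hplus_mul_norm_mul_sinh_le {k t a θ q r W : ℝ} {v : ℂ} (hq : 0 < q) (hqt : q ≤ t * a)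
    (hta : 1 < t * a) (ht : 0 ≤ t) (htr : t ≤ r) (hv : ‖v‖ ≤ W) :
    hplus k ((t : ℂ) * (a : ℂ) * Complex.exp (θ * Complex.I)) ^ 2 * ‖v‖ * sinh t
      ≤ q⁻¹ * exp (2 * (a * cos θ) * t) * W * sinh r := by
  have hW : 0 ≤ W := (norm_nonneg v).trans hv
  have hbound : 0 ≤ q⁻¹ * exp (2 * (a * cos θ) * t) * W := by positivity
  exact mul_le_mul (mul_le_mul (sq_hplus_le hq hqt hta) hv (norm_nonneg v) (by positivity))
    (sinh_le_sinh.2 htr) (sinh_nonneg_iff.2 ht) hbound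

lemma integral_sq_hplus_mul_norm_mul_sinh_le (k : ℝ) {r₀ M s c σ a θ : ℝ} {V : ℝ → ℂ}
    (hσ : 0 < σ) (hs : 0 < s) (hc : 0 ≤ c) (ha : 0 < a) (hcos : 0 < cos θ) (hua : 1 / a ≤ r₀)
    (hV_bd : ∀ t ∈ Icc (0:ℝ) r₀, ‖V t‖ ≤ M)
    (hV_near : ∀ t ∈ Ioo s r₀, ‖V t‖ ≤ c * (r₀ - t) ^ (σ - 1)) :
    ∫ t in (1/a)..r₀,
        (hplus k ((t : ℂ) * (a : ℂ) * Complex.exp (θ * Complex.I))) ^ 2 * ‖V t‖ * sinh t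
      ≤ M * sinh r₀ * r₀ * exp (2 * (a * cos θ) * s) + c * sinh r₀ / (s * a) *
          (exp (2 * (a * cos θ) * r₀) * ((2 * (a * cos θ)) ^ (-σ) * Gamma σ)) := by
  have hr₀ : 0 < r₀ := (one_div_pos.2 ha).trans_le hua
  have hM : 0 ≤ M := (norm_nonneg _).trans (hV_bd 0 ⟨le_rfl, hr₀.le⟩)
  have hta : ∀ t ∈ Ioo (1 / a) r₀, 1 < t * a := fun t ht => (div_lt_iff₀ ha).1 ht.1
  have ht0 : ∀ t ∈ Ioo (1 / a) r₀, 0 ≤ t := fun t ht => (one_div_pos.2 ha).le.trans ht.1.le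
  refine (integral_le_of_le_exp_of_le_rpow_sub_mul_exp (s := s) (A := M * sinh r₀)
    (D := c * sinh r₀ / (s * a)) (B := 2 * (a * cos θ)) hσ (by positivity) hua (by positivity)
    (by positivity) (fun t ht => ?_) (fun t ht hts => ?_) (fun t ht hst => ?_)).trans ?_
  · exact mul_nonneg (mul_nonneg (sq_nonneg _) (norm_nonneg _)) (sinh_nonneg_iff.2 (ht0 t ht))
  · exact (sq_hplus_mul_norm_mul_sinh_le one_pos (hta t ht).le (hta t ht) (ht0 t ht) ht.2.le
      (hV_bd t ⟨ht0 t ht, ht.2.le⟩)).trans_eq (by ring)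
  · exact (sq_hplus_mul_norm_mul_sinh_le (q := s * a) (by positivity)
      (mul_le_mul_of_nonneg_right hst.le ha.le) (hta t ht) (ht0 t ht) ht.2.le
      (hV_near t ⟨hst, ht.2⟩)).trans_eq (by ring)
  · gcongr
    exact sub_le_self _ (one_div_pos.2 ha).le

theorem low_frequency_integral_estimate_general
    (r₀ : ℝ) (hr₀ : 0 < r₀) (V : ℝ → ℂ)
    (M : ℝ) (hV_bd : ∀ t ∈ Icc (0:ℝ) r₀, ‖V t‖ ≤ M)
    (κ : ℂ) (σ : ℝ) (hσ : 1 ≤ σ)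
    (hV_asymp : Tendsto (fun t : ℝ => V t / (κ * ((r₀ - t : ℝ) : ℂ) ^ ((σ - 1 : ℝ) : ℂ)))
      (nhdsWithin r₀ (Iio r₀)) (nhds 1))
    (ε : ℝ) (hε : 0 < ε) (k : ℝ) :
    ∃ C N : ℝ, ∀ θ : ℝ, |θ| < Real.pi / 2 - ε → ∀ a : ℝ, N ≤ a →
      ∫ t in (1/a)..r₀,
          (hplus k ((t : ℂ) * (a : ℂ) * Complex.exp (θ * Complex.I))) ^ 2
            * ‖V t‖ * Real.sinh t
        ≤ C / a * (a * Real.cos θ) ^ (-σ) * Real.exp (2 * r₀ * a * Real.cos θ) := by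
  obtain ⟨s, ⟨hs, hsr⟩, c, hc, hV_near⟩ := exists_norm_le_rpow_of_tendsto_div hr₀ hV_asymp
  obtain ⟨X, hX⟩ := eventually_atTop.1
    ((eventually_exp_mul_le_rpow_neg_mul_exp_mul two_pos hsr (σ + 1)).and (eventually_gt_atTop 0))
  refine ⟨sinh r₀ * (M * r₀ / sin ε + c * Gamma σ / s), max (X / sin ε) r₀⁻¹,
    fun θ hθ a ha => ?_⟩
  have hsinε : 0 < sin ε := sin_pos_of_pos_of_lt_pi hε (by linarith [abs_nonneg θ, pi_pos])
  obtain ⟨hXa, hr₀a⟩ := max_le_iff.1 ha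
  have ha0 : 0 < a := (inv_pos.2 hr₀).trans_le hr₀a
  have hxa : sin ε * a ≤ a * cos θ := by
    rw [mul_comm]
    exact mul_le_mul_of_nonneg_left (sin_le_cos_of_abs_le hε.le hθ.le) ha0.le
  obtain ⟨hexp, hx0⟩ := hX (a * cos θ) (((div_le_iff₀ hsinε).1 hXa).trans (by linarith))
  set x := a * cos θ
  have hexp' : exp (2 * x * s) ≤ x ^ (-σ) * (sin ε * a)⁻¹ * exp (2 * x * r₀) :=
    calc exp (2 * x * s) ≤ x ^ (-(σ + 1)) * exp (2 * x * r₀) := hexp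
      _ = x ^ (-σ) * x⁻¹ * exp (2 * x * r₀) := by rw [neg_add, rpow_add hx0, rpow_neg_one]
      _ ≤ _ := by gcongr
  have hpow : (2 * x) ^ (-σ) ≤ x ^ (-σ) := rpow_le_rpow_of_nonpos hx0 (by linarith) (by linarith)
  have hΓ : 0 ≤ Gamma σ := Gamma_nonneg_of_nonneg (by linarith)
  calc _ ≤ M * sinh r₀ * r₀ * exp (2 * x * s)
        + c * sinh r₀ / (s * a) * (exp (2 * x * r₀) * ((2 * x) ^ (-σ) * Gamma σ)) :=
        integral_sq_hplus_mul_norm_mul_sinh_le k (by linarith) hs hc ha0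
          (pos_of_mul_pos_right hx0 ha0.le) (by rw [one_div]; exact inv_le_of_inv_le₀ hr₀ hr₀a)
          hV_bd hV_near
    _ ≤ M * sinh r₀ * r₀ * (x ^ (-σ) * (sin ε * a)⁻¹ * exp (2 * x * r₀))
        + c * sinh r₀ / (s * a) * (exp (2 * x * r₀) * (x ^ (-σ) * Gamma σ)) := by
        have hM : 0 ≤ M := (norm_nonneg _).trans (hV_bd 0 ⟨le_rfl, hr₀.le⟩)
        gcongr
    _ = _ := by
        rw [show 2 * r₀ * a * cos θ = 2 * x * r₀ by ring]
        field_simp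

/-- Low-frequency integral estimate: if `V ∈ L^∞[0,r₀]` is continuous near `r₀` with
`V(t) ~ κ (r₀−t)^{σ−1}` as `t → r₀⁻` (`σ ≥ 1`, `κ ≠ 0`), then for each `ε > 0` and `k ≥ 0`
there are `C, N` such that for `θ ∈ (−π/2+ε, π/2−ε)` and `a ≥ N`,
`∫_{1/a}^{r₀} h⁺_k(t a e^{iθ})² |V(t)| sinh t dt ≤ (C/a)(a cos θ)^{−σ} e^{2 r₀ a cos θ}`. -/
theorem low_frequency_integral_estimate
    (r₀ : ℝ) (hr₀ : 0 < r₀) (V : ℝ → ℂ) (hV_meas : Measurable V)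
    (M : ℝ) (hV_bd : ∀ t ∈ Icc (0:ℝ) r₀, ‖V t‖ ≤ M)
    (δ : ℝ) (hδ : 0 < δ) (hV_cont : ContinuousOn V (Icc (r₀ - δ) r₀))
    (κ : ℂ) (hκ : κ ≠ 0) (σ : ℝ) (hσ : 1 ≤ σ)
    (hV_asymp : Tendsto (fun t : ℝ => V t / (κ * ((r₀ - t : ℝ) : ℂ) ^ ((σ - 1 : ℝ) : ℂ)))
      (nhdsWithin r₀ (Iio r₀)) (nhds 1))
    (ε : ℝ) (hε : 0 < ε) (k : ℝ) (hk : 0 ≤ k) :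
    ∃ C N : ℝ, ∀ θ : ℝ, |θ| < Real.pi / 2 - ε → ∀ a : ℝ, N ≤ a →
      ∫ t in (1/a)..r₀,
          (hplus k ((t : ℂ) * (a : ℂ) * Complex.exp (θ * Complex.I))) ^ 2
            * ‖V t‖ * Real.sinh t
        ≤ C / a * (a * Real.cos θ) ^ (-σ) * Real.exp (2 * r₀ * a * Real.cos θ) :=
  low_frequency_integral_estimate_general r₀ hr₀ V M hV_bd κ σ hσ hV_asymp ε hε k
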